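/- Let Γ be a finite cc0-language over D and let C be the core of Γ. Then Γ|C∪{0} is a core; that is, the component of Γ|C∪{0} generated by the set of all nondegenerate values of dom(Γ|C∪{0}) equals C. -/
import Mathlib


/-!
Common definitions for formalizing "Constraint satisfaction parameterized by
solution size" (Bulatov, Marx).  The finite domain `D` has a distinguished
element `0`.  A constraint language is a set of (arity, relation) pairs.
-/

namespace CSPPaper

variable {D : Type*} {V : Type*}

/-- A constraint language over `D`: a set of pairs (arity, relation). -/
abbrev Lang (D : Type*) : Type _ := Set (Σ n : ℕ, Set (Fin n → D))

/-- The set of values appearing in tuples of the relations of `Γ`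
(together with the distinguished value `0`). -/
def dom [Zero D] (Γ : Lang D) : Set D :=
  insert 0 { d | ∃ R ∈ Γ, ∃ t ∈ R.2, ∃ i, t i = d }

/-- A relation is 0-valid if the all-zero tuple belongs to it. -/
def ZeroValid [Zero D] {n : ℕ} (R : Set (Fin n → D)) : Prop :=
  (fun _ => (0 : D)) ∈ R

/-- Two tuples are disjoint if at every coordinate at least one of them is `0`. -/
def DisjTup [Zero D] {ι : Type*} (t₁ t₂ : ι → D) : Prop :=
  ∀ i, t₁ i = 0 ∨ t₂ i = 0

open Classical in
/-- The union of two (disjoint) tuples. -/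
noncomputable def unionTup [Zero D] {ι : Type*} (t₁ t₂ : ι → D) : ι → D :=
  fun i => if t₁ i = 0 then t₂ i else t₁ i

/-- A tuple is contained in a set `C` if all of its nonzero coordinates lie in `C`. -/
def TupIn [Zero D] {ι : Type*} (t : ι → D) (C : Set D) : Prop :=
  ∀ i, t i ≠ 0 → t i ∈ C

open Classical in
/-- Extend an `m`-tuple to an `n`-tuple along the coordinates in the range of `e`,
using the constants `c` on the remaining coordinates. -/
noncomputable def extendTup {n m : ℕ} (e : Fin m → Fin n) (c : Fin n → D)
    (t : Fin m → D) : Fin n → D :=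
  fun j => if h : ∃ i, e i = j then t h.choose else c j

/-- Substitution of constants: the relation obtained from `R` by keeping the coordinates
in the range of the order-embedding `e` (in order) and substituting the constants `c`
into all the remaining coordinates. -/
noncomputable def substRel {n m : ℕ} (R : Set (Fin n → D)) (e : Fin m ↪o Fin n)
    (c : Fin n → D) : Set (Fin m → D) :=
  { t | extendTup (fun i => e i) c t ∈ R }

/-- `Γ` is a cc0-language: every relation of `Γ` is 0-valid and every 0-valid relation
obtained from a relation of `Γ` by substituting constants belongs to `Γ`. -/
def IsCC0 [Zero D] (Γ : Lang D) : Prop :=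
  (∀ R ∈ Γ, ZeroValid R.2) ∧
  ∀ R ∈ Γ, ∀ (m : ℕ) (e : Fin m ↪o Fin R.1) (c : Fin R.1 → D),
    ZeroValid (substRel R.2 e c) →
      (⟨m, substRel R.2 e c⟩ : Σ n : ℕ, Set (Fin n → D)) ∈ Γ

/-- A (0-valid) relation is weakly separable: closed under union of disjoint tuples
and under difference. -/
def WeaklySepRel [Zero D] {n : ℕ} (R : Set (Fin n → D)) : Prop :=
  (∀ t₁ ∈ R, ∀ t₂ ∈ R, DisjTup t₁ t₂ → unionTup t₁ t₂ ∈ R) ∧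
  (∀ t₁ t₂ : Fin n → D, DisjTup t₁ t₂ → t₂ ∈ R → unionTup t₁ t₂ ∈ R → t₁ ∈ R)

/-- A constraint language is weakly separable if all of its relations are. -/
def WeaklySep [Zero D] (Γ : Lang D) : Prop :=
  ∀ R ∈ Γ, WeaklySepRel R.2

/-- A union counterexample `(R, t₁, t₂)` to weak separability. -/
def UnionCE [Zero D] (Γ : Lang D) (R : Σ n : ℕ, Set (Fin n → D))
    (t₁ t₂ : Fin R.1 → D) : Prop :=
  R ∈ Γ ∧ DisjTup t₁ t₂ ∧ t₁ ∈ R.2 ∧ t₂ ∈ R.2 ∧ unionTup t₁ t₂ ∉ R.2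

/-- A difference counterexample `(R, t₁, t₂)` to weak separability. -/
def DiffCE [Zero D] (Γ : Lang D) (R : Σ n : ℕ, Set (Fin n → D))
    (t₁ t₂ : Fin R.1 → D) : Prop :=
  R ∈ Γ ∧ DisjTup t₁ t₂ ∧ t₂ ∈ R.2 ∧ unionTup t₁ t₂ ∈ R.2 ∧ t₁ ∉ R.2

/-- An endomorphism of a constraint language (as a total map on `D`). -/
def IsEndo [Zero D] (Γ : Lang D) (h : D → D) : Prop :=
  h 0 = 0 ∧ ∀ R ∈ Γ, ∀ t ∈ R.2, (fun i => h (t i)) ∈ R.2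

/-- A multivalued morphism of a constraint language (as a total map `D → Set D`). -/
def IsMVM [Zero D] (Γ : Lang D) (φ : D → Set D) : Prop :=
  φ 0 = {0} ∧ ∀ R ∈ Γ, ∀ t ∈ R.2, ∀ s : Fin R.1 → D, (∀ i, s i ∈ φ (t i)) → s ∈ R.2

/-- `x` produces `y` in `Γ`: there is a multivalued morphism `φ` with `φ x = {0, y}`
and `φ z = {0}` for every `z ≠ x`. -/
def Produces [Zero D] (Γ : Lang D) (x y : D) : Prop :=
  ∃ φ : D → Set D, IsMVM Γ φ ∧ φ x = {0, y} ∧ ∀ z, z ≠ x → φ z = {0}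

/-- `y` is regular (type 1): no multivalued morphism has `0, y ∈ φ x` for some
`x ∈ dom Γ`. -/
def IsRegular [Zero D] (Γ : Lang D) (y : D) : Prop :=
  ¬ ∃ (φ : D → Set D) (x : D), IsMVM Γ φ ∧ x ∈ dom Γ ∧ 0 ∈ φ x ∧ y ∈ φ x

/-- `y` is semiregular (type 2): some multivalued morphism has `0, y ∈ φ x` for some
`x ∈ dom Γ`, but no `x ∈ dom Γ` produces `y`. -/
def IsSemiregular [Zero D] (Γ : Lang D) (y : D) : Prop :=
  (∃ (φ : D → Set D) (x : D), IsMVM Γ φ ∧ x ∈ dom Γ ∧ 0 ∈ φ x ∧ y ∈ φ x) ∧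
    ¬ ∃ x ∈ dom Γ, Produces Γ x y

/-- `y` is self-producing (type 3): `y` produces `y`, and every `x` that produces `y`
is produced by `y`. -/
def IsSelfProducing [Zero D] (Γ : Lang D) (y : D) : Prop :=
  Produces Γ y y ∧ ∀ x ∈ dom Γ, Produces Γ x y → Produces Γ y x

/-- `y` is degenerate (type 4): none of the above. -/
def IsDegenerate [Zero D] (Γ : Lang D) (y : D) : Prop :=
  ¬ IsRegular Γ y ∧ ¬ IsSemiregular Γ y ∧ ¬ IsSelfProducing Γ y

open Classical in
/-- The type (1–4) of a value: regular, semiregular, self-producing, degenerate. -/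
noncomputable def typeOf [Zero D] (Γ : Lang D) (y : D) : ℕ :=
  if IsRegular Γ y then 1
  else if IsSemiregular Γ y then 2
  else if IsSelfProducing Γ y then 3
  else 4

open Classical in
/-- The retraction onto `X`: identity on `X` and `0` elsewhere. -/
noncomputable def prRet [Zero D] (X : Set D) : D → D :=
  fun x => if x ∈ X then x else 0

/-- A component of `Γ`: a nonempty subset of `dom Γ \ {0}` whose retraction is an
endomorphism of `Γ`. -/
def IsComponent [Zero D] (Γ : Lang D) (C : Set D) : Prop :=
  C.Nonempty ∧ C ⊆ dom Γ \ {0} ∧ IsEndo Γ (prRet C)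

/-- `C` is the component of `Γ` generated by `X`: the inclusion-minimal component
containing `X`. -/
def GenComponent [Zero D] (Γ : Lang D) (X C : Set D) : Prop :=
  IsComponent Γ C ∧ X ⊆ C ∧ ∀ C', IsComponent Γ C' → X ⊆ C' → C ⊆ C'

/-- Restriction of a relation to a subset of the domain. -/
def restrictRel {n : ℕ} (D' : Set D) (R : Set (Fin n → D)) : Set (Fin n → D) :=
  { t ∈ R | ∀ i, t i ∈ D' }

/-- Restriction `Γ|D'` of a language to a subset of the domain. -/
def restrictLang (Γ : Lang D) (D' : Set D) : Lang D :=
  (fun R : Σ n : ℕ, Set (Fin n → D) =>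
    (⟨R.1, restrictRel D' R.2⟩ : Σ n : ℕ, Set (Fin n → D))) '' Γ

/-- Inner homomorphism of `Γ` from `D₁` to `D₂` (as a total map on `D`). -/
def InnerHom [Zero D] (Γ : Lang D) (D₁ D₂ : Set D) (h : D → D) : Prop :=
  h 0 = 0 ∧ (∀ a ∈ D₁, h a ∈ D₂) ∧
  ∀ R ∈ Γ, ∀ t ∈ R.2, (∀ i, t i ∈ D₁) → (fun i => h (t i)) ∈ R.2

/-- `D₁` is a closed set in `Γ`: `0 ∈ D₁ ⊆ dom Γ` and no inner homomorphism of `Γ`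
from `D₁` to `dom Γ` maps an element of `D₁` outside `D₁`. -/
def ClosedSet [Zero D] (Γ : Lang D) (D₁ : Set D) : Prop :=
  0 ∈ D₁ ∧ D₁ ⊆ dom Γ ∧
  ∀ h : D → D, InnerHom Γ D₁ (dom Γ) h → ∀ a ∈ D₁, h a ∈ D₁

/-- The set of nonzero nondegenerate values of `Γ`. -/
def NDvals [Zero D] (Γ : Lang D) : Set D :=
  { y | y ∈ dom Γ ∧ y ≠ 0 ∧ ¬ IsDegenerate Γ y }

/-- An instance of a CSP over domain `D` with variable set `V`: a set of constraints,
each consisting of an arity `n`, a scope (an `n`-tuple of variables, repetitions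
allowed) and an `n`-ary relation. -/
structure CSPInstance (D : Type*) (V : Type*) where
  cons : Set (Σ n : ℕ, (Fin n → V) × Set (Fin n → D))

/-- All constraint relations of the instance belong to `Γ` (instance of `CSP(Γ)`). -/
def CSPInstance.InLang (I : CSPInstance D V) (Γ : Lang D) : Prop :=
  ∀ c ∈ I.cons, (⟨c.1, c.2.2⟩ : Σ n : ℕ, Set (Fin n → D)) ∈ Γ

/-- `τ` is a satisfying assignment of the instance. -/
def CSPInstance.Sat (I : CSPInstance D V) (τ : V → D) : Prop :=
  ∀ c ∈ I.cons, (fun i => τ (c.2.1 i)) ∈ c.2.2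

/-- `f'` extends `f`: they agree on all variables where `f` is nonzero. -/
def ExtendsA [Zero D] (f' f : V → D) : Prop :=
  ∀ v, f v ≠ 0 → f' v = f v

/-- The size of an assignment: the number of variables with nonzero value. -/
noncomputable def sizeA [Zero D] (f : V → D) : ℕ :=
  Set.ncard { v | f v ≠ 0 }

/-- `f'` is a minimal satisfying extension of `f` in the instance `I`. -/
def MinSatExt [Zero D] (I : CSPInstance D V) (f f' : V → D) : Prop :=
  I.Sat f' ∧ ExtendsA f' f ∧
  ∀ f'' : V → D, I.Sat f'' → ExtendsA f'' f → ExtendsA f' f'' → f'' = f'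

/-- A minimal satisfying assignment of `I`: satisfying, not identically zero, and not
a proper extension of any other not-identically-zero satisfying assignment. -/
def MinSatAssign [Zero D] (I : CSPInstance D V) (f : V → D) : Prop :=
  I.Sat f ∧ f ≠ (fun _ => 0) ∧
  ∀ g : V → D, I.Sat g → g ≠ (fun _ => 0) → ExtendsA f g → g = f

open Classical in
/-- The assignment giving value `d` to variable `v` and `0` to every other variable. -/
noncomputable def delta [Zero D] (v : V) (d : D) : V → D :=
  fun w => if w = v then d else 0

/-- The integers `Z_{i,d}^{t,Δ}` of the paper. -/
def Zc (t Δ i d : ℕ) : ℕ :=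
  (4*t*Δ)^(2*t*Δ + (i*Δ + d)) + (4*t*Δ)^(5*t*Δ - (i*Δ + d))

/-- The set `Z^{t,Δ}` of all the integers `Z_{i,d}^{t,Δ}` for `1 ≤ i ≤ t`, `1 ≤ d ≤ Δ`. -/
def Zset (t Δ : ℕ) : Set ℕ :=
  { z | ∃ i d : ℕ, 1 ≤ i ∧ i ≤ t ∧ 1 ≤ d ∧ d ≤ Δ ∧ z = Zc t Δ i d }

section Statement16Aux

variable {D : Type*} [Zero D]

lemma prRet_apply_mem {X : Set D} {x : D} (hx : x ∈ X) : prRet X x = x := by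
  simp [prRet, hx]

lemma prRet_apply_not_mem {X : Set D} {x : D} (hx : x ∉ X) : prRet X x = 0 := by
  simp [prRet, hx]

lemma prRet_zero (X : Set D) : prRet X (0 : D) = 0 := by
  unfold prRet; split <;> rfl

lemma prRet_mem_union (X : Set D) (x : D) : prRet X x ∈ X ∪ {0} := by
  unfold prRet; split
  · exact Or.inl ‹_›
  · exact Or.inr rfl

variable {Γ : Lang D} {C : Set D}

lemma mem_restrictLang {D' : Set D} {R : Σ n : ℕ, Set (Fin n → D)} (hR : R ∈ Γ) :
    (⟨R.1, restrictRel D' R.2⟩ : Σ n : ℕ, Set (Fin n → D)) ∈ restrictLang Γ D' :=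
  ⟨R, hR, rfl⟩

lemma restrict_tuple (hend : IsEndo Γ (prRet C)) {R : Σ n : ℕ, Set (Fin n → D)}
    (hR : R ∈ Γ) {t : Fin R.1 → D} (ht : t ∈ R.2) :
    (fun i => prRet C (t i)) ∈ restrictRel (C ∪ {0}) R.2 :=
  ⟨hend.2 R hR t ht, fun i => prRet_mem_union C (t i)⟩

lemma endo_restrict (hend : IsEndo Γ (prRet C)) :
    IsEndo (restrictLang Γ (C ∪ {0})) (prRet C) := by
  refine ⟨prRet_zero C, ?_⟩
  rintro R' ⟨R, hR, rfl⟩ t ht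
  exact ⟨hend.2 R hR t ht.1, fun i => prRet_mem_union C (t i)⟩

lemma dom_restrict_subset : dom (restrictLang Γ (C ∪ {0})) ⊆ C ∪ {0} := by
  intro d hd
  rcases hd with rfl | ⟨R', hR', t, ht, i, rfl⟩
  · exact Or.inr rfl
  · obtain ⟨R, hR, rfl⟩ := hR'
    exact ht.2 i

lemma dom_restrict_subset_dom : dom (restrictLang Γ (C ∪ {0})) ⊆ dom Γ := by
  intro d hd
  rcases hd with rfl | ⟨R', hR', t, ht, i, rfl⟩
  · exact Or.inl rfl
  · obtain ⟨R, hR, rfl⟩ := hR'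
    exact Or.inr ⟨R, hR, t, ht.1, i, rfl⟩

lemma C_subset_dom_restrict (hcomp : IsComponent Γ C) :
    C ⊆ dom (restrictLang Γ (C ∪ {0})) := by
  intro c hc
  have hcd : c ∈ dom Γ := (hcomp.2.1 hc).1
  have hc0 : c ≠ 0 := (hcomp.2.1 hc).2
  rcases hcd with rfl | ⟨R, hR, t, ht, i, rfl⟩
  · exact absurd rfl hc0
  · refine Or.inr ⟨⟨R.1, restrictRel (C ∪ {0}) R.2⟩, mem_restrictLang hR,
      fun j => prRet C (t j), restrict_tuple hcomp.2.2 hR ht, i, ?_⟩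
    exact prRet_apply_mem hc

lemma isMVM_restrict (hend : IsEndo Γ (prRet C)) {φ : D → Set D} (hφ : IsMVM Γ φ) :
    IsMVM (restrictLang Γ (C ∪ {0})) (fun z => φ z ∩ (C ∪ {0})) := by
  constructor
  · show φ 0 ∩ (C ∪ {0}) = {0}
    rw [hφ.1]
    exact Set.inter_eq_self_of_subset_left (by simp)
  · rintro R' ⟨R, hR, rfl⟩ t ht s hs
    exact ⟨hφ.2 R hR t ht.1 s (fun i => (hs i).1), fun i => (hs i).2⟩

lemma isMVM_comp (hend : IsEndo Γ (prRet C)) {φ : D → Set D}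
    (hφ : IsMVM (restrictLang Γ (C ∪ {0})) φ) :
    IsMVM Γ (fun z => φ (prRet C z)) := by
  refine ⟨by show φ (prRet C 0) = {0}; rw [prRet_zero]; exact hφ.1, ?_⟩
  intro R hR t ht s hs
  exact (hφ.2 ⟨R.1, restrictRel (C ∪ {0}) R.2⟩ (mem_restrictLang hR)
    (fun i => prRet C (t i)) (restrict_tuple hend hR ht) s hs).1

lemma produces_restrict (hend : IsEndo Γ (prRet C)) {x y : D} (hy : y ∈ C ∪ {0})
    (h : Produces Γ x y) : Produces (restrictLang Γ (C ∪ {0})) x y := by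
  obtain ⟨φ, hφ, hφx, hφz⟩ := h
  refine ⟨fun z => φ z ∩ (C ∪ {0}), isMVM_restrict hend hφ, ?_, ?_⟩
  · show φ x ∩ (C ∪ {0}) = {0, y}
    rw [hφx]
    refine Set.inter_eq_self_of_subset_left ?_
    rintro a (rfl | rfl)
    · exact Or.inr rfl
    · exact hy
  · intro z hz
    show φ z ∩ (C ∪ {0}) = {0}
    rw [hφz z hz]
    exact Set.inter_eq_self_of_subset_left (by simp)

lemma produces_comp (hend : IsEndo Γ (prRet C)) {x y : D} (hx : x ∈ C)
    (h : Produces (restrictLang Γ (C ∪ {0})) x y) : Produces Γ x y := by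
  obtain ⟨φ, hφ, hφx, hφz⟩ := h
  refine ⟨fun z => φ (prRet C z), isMVM_comp hend hφ, ?_, ?_⟩
  · show φ (prRet C x) = {0, y}
    rw [prRet_apply_mem hx]; exact hφx
  · intro z hz
    show φ (prRet C z) = {0}
    by_cases hzC : z ∈ C
    · rw [prRet_apply_mem hzC]; exact hφz z hz
    · rw [prRet_apply_not_mem hzC]; exact hφ.1

lemma produces_zero_eq {Γ' : Lang D} {y : D} (h : Produces Γ' 0 y) : y = 0 := by
  obtain ⟨φ, hφ, hφ0, _⟩ := h
  have : ({0, y} : Set D) = {0} := hφ0 ▸ hφ.1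
  have hy : y ∈ ({0} : Set D) := this ▸ (Or.inr rfl : y ∈ ({0, y} : Set D))
  exact hy

lemma nondeg_transfer (hcomp : IsComponent Γ C) {y : D} (hyC : y ∈ C)
    (hnd : ¬ IsDegenerate Γ y) : ¬ IsDegenerate (restrictLang Γ (C ∪ {0})) y := by
  rintro ⟨hnr', hns', hnsp'⟩
  have hend := hcomp.2.2
  have hy0 : y ≠ 0 := (hcomp.2.1 hyC).2
  -- from ¬regular in Γ', there is a witnessing mvm
  have hex' : ∃ (φ : D → Set D) (x : D), IsMVM (restrictLang Γ (C ∪ {0})) φ ∧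
      x ∈ dom (restrictLang Γ (C ∪ {0})) ∧ 0 ∈ φ x ∧ y ∈ φ x := not_not.mp hnr'
  -- from ¬semiregular in Γ', some x ∈ dom Γ' produces y in Γ'
  have hpx' : ∃ x ∈ dom (restrictLang Γ (C ∪ {0})), Produces (restrictLang Γ (C ∪ {0})) x y := by
    by_contra h; exact hns' ⟨hex', h⟩
  obtain ⟨x, hxdom', hxprod'⟩ := hpx'
  have hxC : x ∈ C := by
    rcases dom_restrict_subset hxdom' with h | h
    · exact h
    · exact absurd (produces_zero_eq (h ▸ hxprod')) hy0
  have hxprod : Produces Γ x y := produces_comp hend hxC hxprod'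
  have hxdom : x ∈ dom Γ := (hcomp.2.1 hxC).1
  have hnr : ¬ IsRegular Γ y := by
    intro hr
    obtain ⟨φ, hφ, hφx, _⟩ := hxprod
    exact hr ⟨φ, x, hφ, hxdom, by rw [hφx]; exact Or.inl rfl, by rw [hφx]; exact Or.inr rfl⟩
  have hns : ¬ IsSemiregular Γ y := fun hs => hs.2 ⟨x, hxdom, hxprod⟩
  have hsp : IsSelfProducing Γ y := by
    by_contra h; exact hnd ⟨hnr, hns, h⟩
  have hyy' : Produces (restrictLang Γ (C ∪ {0})) y y :=
    produces_restrict hend (Or.inl hyC) hsp.1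
  have hbad : ∃ x₁ ∈ dom (restrictLang Γ (C ∪ {0})),
      Produces (restrictLang Γ (C ∪ {0})) x₁ y ∧
        ¬ Produces (restrictLang Γ (C ∪ {0})) y x₁ := by
    by_contra h
    push_neg at h
    exact hnsp' ⟨hyy', fun a ha hp => h a ha hp⟩
  obtain ⟨x₁, hx₁dom', hx₁p', hx₁np'⟩ := hbad
  have hx₁C : x₁ ∈ C := by
    rcases dom_restrict_subset hx₁dom' with h | h
    · exact h
    · exact absurd (produces_zero_eq (h ▸ hx₁p')) hy0
  have hx₁p : Produces Γ x₁ y := produces_comp hend hx₁C hx₁p'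
  exact hx₁np' (produces_restrict hend (Or.inl hx₁C)
    (hsp.2 x₁ (hcomp.2.1 hx₁C).1 hx₁p))

end Statement16Aux

/-- If `C` is the core of a finite cc0-language `Γ` (the component of `Γ`
generated by the set of nondegenerate values), then `Γ|C∪{0}` is a core: the component
of `Γ|C∪{0}` generated by the nondegenerate values of `Γ|C∪{0}` equals `C`. -/
theorem statement16 {D : Type*} [Zero D] [Fintype D]
    (Γ : Lang D) (hΓfin : Γ.Finite) (hcc0 : IsCC0 Γ)
    (C : Set D) (hC : GenComponent Γ (NDvals Γ) C) :
    GenComponent (restrictLang Γ (C ∪ {0}))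
      (NDvals (restrictLang Γ (C ∪ {0}))) C := by
  obtain ⟨hcomp, hsub, hmin⟩ := hC
  have hend := hcomp.2.2
  refine ⟨⟨hcomp.1, ?_, endo_restrict hend⟩, ?_, ?_⟩
  · intro c hc
    exact ⟨C_subset_dom_restrict hcomp hc, (hcomp.2.1 hc).2⟩
  · rintro y ⟨hyd, hy0, _⟩
    rcases dom_restrict_subset hyd with h | h
    · exact h
    · exact absurd h hy0
  · intro C' hC' hND'
    have hC'subC : C' ⊆ C := by
      intro a ha
      rcases dom_restrict_subset (hC'.2.1 ha).1 with h | h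
      · exact h
      · exact absurd h (hC'.2.1 ha).2
    have hcompΓ : IsComponent Γ C' := by
      refine ⟨hC'.1, fun a ha =>
        ⟨dom_restrict_subset_dom (hC'.2.1 ha).1, (hC'.2.1 ha).2⟩, prRet_zero C', ?_⟩
      intro R hR t ht
      have h2 := hC'.2.2.2 ⟨R.1, restrictRel (C ∪ {0}) R.2⟩ (mem_restrictLang hR)
        (fun i => prRet C (t i)) (restrict_tuple hend hR ht)
      have h3 : (fun i => prRet C' (t i)) = fun i => prRet C' (prRet C (t i)) := by
        funext i
        by_cases hti : t i ∈ C
        · rw [prRet_apply_mem hti]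
        · rw [prRet_apply_not_mem hti, prRet_zero,
            prRet_apply_not_mem (fun h => hti (hC'subC h))]
      rw [h3]
      exact h2.1
    apply hmin C' hcompΓ
    intro y hy
    have hyC : y ∈ C := hsub hy
    exact hND' ⟨C_subset_dom_restrict hcomp hyC, hy.2.1, nondeg_transfer hcomp hyC hy.2.2⟩

end CSPPaper
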